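/- Let α₁,…,α_n be i.i.d. Rademacher random variables and φ₁,…,φ_n ∈ ℝ^d the rows of an orthonormal-column matrix Q satisfying the coherence bound max_t ‖φ_t‖² ≤ (dκ/n) n^{1−ρ} with κ > 0, 0 < ρ ≤ 1. Set K = Σₜ αₜ φₜφₜᵀ. Then for every 0 < ε₀ ≤ 1, P( max_i |λ_i(K)| ≥ ε₀ ) ≤ 2d exp( − n^ρ ε₀² / (2κ d²) ). -/

import Mathlib

set_option maxHeartbeats 1000000

open MeasureTheory ProbabilityTheory Matrix
open scoped Nat

/-- termwise binomial pair monotonicity -/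
lemma stmt14_aux_pow_pair {D e E : ℝ} (he : 0 ≤ e) (heE : e ≤ E) (hED : E ≤ D) (k : ℕ) :
    (D + e) ^ k + (D - e) ^ k ≤ (D + E) ^ k + (D - E) ^ k := by
  have hD : 0 ≤ D := le_trans (le_trans he heE) hED
  have expand : ∀ c : ℝ, (D + c) ^ k + (D - c) ^ k =
      ∑ i ∈ Finset.range (k + 1), D ^ i * (c ^ (k - i) + (-c) ^ (k - i)) * (k.choose i) := by
    intro c
    rw [sub_eq_add_neg, add_pow, add_pow, ← Finset.sum_add_distrib]
    exact Finset.sum_congr rfl fun i _ => by ring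
  rw [expand, expand]
  apply Finset.sum_le_sum
  intro i _
  have h1 : e ^ (k - i) + (-e) ^ (k - i) ≤ E ^ (k - i) + (-E) ^ (k - i) := by
    rcases Nat.even_or_odd (k - i) with hpar | hpar
    · rw [hpar.neg_pow, hpar.neg_pow]
      have := pow_le_pow_left₀ he heE (k - i)
      linarith
    · rw [hpar.neg_pow, hpar.neg_pow]
      simp
  have h2 : (0:ℝ) ≤ D ^ i * ((k.choose i : ℕ) : ℝ) := by positivity
  calc D ^ i * (e ^ (k - i) + (-e) ^ (k - i)) * (k.choose i)
      = D ^ i * ((k.choose i : ℕ) : ℝ) * (e ^ (k - i) + (-e) ^ (k - i)) := by ring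
    _ ≤ D ^ i * ((k.choose i : ℕ) : ℝ) * (E ^ (k - i) + (-E) ^ (k - i)) :=
        mul_le_mul_of_nonneg_left h1 h2
    _ = D ^ i * (E ^ (k - i) + (-E) ^ (k - i)) * (k.choose i) := by ring

lemma stmt14_hasSum_cosh_sq (p : ℝ) :
    HasSum (fun k : ℕ => (p ^ 2) ^ k / ↑(2 * k)!) (Real.cosh p) := by
  simpa [pow_mul] using Real.hasSum_cosh p

lemma stmt14_key {F : Type*} [NormedAddCommGroup F] [InnerProductSpace ℝ F] (x v : F) :
    Real.cosh ‖x + v‖ + Real.cosh ‖x - v‖ ≤ 2 * Real.cosh ‖x‖ * Real.cosh ‖v‖ := by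
  set a := ‖x‖ with ha
  set b := ‖v‖ with hb
  set c : ℝ := inner ℝ x v with hc
  have hab : |c| ≤ a * b := abs_real_inner_le_norm x v
  have ha0 : 0 ≤ a := norm_nonneg x
  have hb0 : 0 ≤ b := norm_nonneg v
  have hp2 : ‖x + v‖ ^ 2 = (a ^ 2 + b ^ 2) + 2 * c := by
    rw [norm_add_sq_real]; ring
  have hq2 : ‖x - v‖ ^ 2 = (a ^ 2 + b ^ 2) - 2 * c := by
    rw [norm_sub_sq_real]; ring
  have hm2 : (a + b) ^ 2 = (a ^ 2 + b ^ 2) + 2 * (a * b) := by ring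
  have hr2 : (a - b) ^ 2 = (a ^ 2 + b ^ 2) - 2 * (a * b) := by ring
  have hrhs : 2 * Real.cosh a * Real.cosh b = Real.cosh (a + b) + Real.cosh (a - b) := by
    rw [Real.cosh_add, Real.cosh_sub]; ring
  rw [hrhs]
  have hL : HasSum (fun k : ℕ =>
      (((a ^ 2 + b ^ 2) + 2 * c) ^ k + ((a ^ 2 + b ^ 2) - 2 * c) ^ k) / ↑(2 * k)!)
      (Real.cosh ‖x + v‖ + Real.cosh ‖x - v‖) := by
    have := (stmt14_hasSum_cosh_sq ‖x + v‖).add (stmt14_hasSum_cosh_sq ‖x - v‖)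
    rw [hp2, hq2] at this
    simpa [add_div] using this
  have hR : HasSum (fun k : ℕ =>
      (((a ^ 2 + b ^ 2) + 2 * (a * b)) ^ k + ((a ^ 2 + b ^ 2) - 2 * (a * b)) ^ k) / ↑(2 * k)!)
      (Real.cosh (a + b) + Real.cosh (a - b)) := by
    have := (stmt14_hasSum_cosh_sq (a + b)).add (stmt14_hasSum_cosh_sq (a - b))
    rw [hm2, hr2] at this
    simpa [add_div] using this
  refine hasSum_le (fun k => ?_) hL hR
  have habs : ((a ^ 2 + b ^ 2) + 2 * c) ^ k + ((a ^ 2 + b ^ 2) - 2 * c) ^ k =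
      ((a ^ 2 + b ^ 2) + 2 * |c|) ^ k + ((a ^ 2 + b ^ 2) - 2 * |c|) ^ k := by
    rcases abs_cases c with ⟨h, _⟩ | ⟨h, _⟩ <;> rw [h] <;> ring
  rw [habs]
  have hED : 2 * (a * b) ≤ a ^ 2 + b ^ 2 := by nlinarith [sq_nonneg (a - b)]
  have hkey := stmt14_aux_pow_pair (by positivity : (0:ℝ) ≤ 2 * |c|)
    (by linarith [hab] : 2 * |c| ≤ 2 * (a * b)) hED k
  have hfact : (0:ℝ) < ↑(2 * k)! := by positivity
  gcongr

lemma stmt14_sum_cosh {F : Type*} [NormedAddCommGroup F] [InnerProductSpace ℝ F] :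
    ∀ (n : ℕ) (v : Fin n → F) (x : F),
      ∑ ε : Fin n → Bool, Real.cosh ‖x + ∑ t, (if ε t then (1:ℝ) else -1) • v t‖ ≤
        2 ^ n * Real.cosh ‖x‖ * ∏ t, Real.cosh ‖v t‖ := by
  intro n
  induction n with
  | zero =>
    intro v x
    simp
  | succ m ih =>
    intro v x
    have hcongr : ∑ ε : Fin (m + 1) → Bool,
        Real.cosh ‖x + ∑ t, (if ε t then (1:ℝ) else -1) • v t‖ =
        ∑ p : Bool × (Fin m → Bool),
          Real.cosh ‖(x + (if p.1 then (1:ℝ) else -1) • v 0) +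
            ∑ i : Fin m, (if p.2 i then (1:ℝ) else -1) • v i.succ‖ := by
      refine (Fintype.sum_equiv (Fin.consEquiv fun _ => Bool) _ _ fun p => ?_).symm
      congr 1
      rw [Fin.sum_univ_succ]
      simp [Fin.consEquiv, add_assoc]
    rw [hcongr, Fintype.sum_prod_type, Fintype.sum_bool]
    have h1 := ih (fun i => v i.succ) (x + v 0)
    have h2 := ih (fun i => v i.succ) (x - v 0)
    have hkey := stmt14_key x (v 0)
    have hprodpos : (0:ℝ) ≤ ∏ i : Fin m, Real.cosh ‖v i.succ‖ :=
      Finset.prod_nonneg fun i _ => (Real.cosh_pos _).le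
    dsimp only
    simp only [Bool.false_eq_true, if_true, if_false, reduceIte, one_smul, neg_smul, ← sub_eq_add_neg]
    rw [Fin.prod_univ_succ]
    calc (∑ ε : Fin m → Bool,
            Real.cosh ‖x + v 0 + ∑ i : Fin m, (if ε i then (1:ℝ) else -1) • v i.succ‖) +
          ∑ ε : Fin m → Bool,
            Real.cosh ‖x - v 0 + ∑ i : Fin m, (if ε i then (1:ℝ) else -1) • v i.succ‖
        ≤ 2 ^ m * Real.cosh ‖x + v 0‖ * ∏ i : Fin m, Real.cosh ‖v i.succ‖ +
            2 ^ m * Real.cosh ‖x - v 0‖ * ∏ i : Fin m, Real.cosh ‖v i.succ‖ := by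
          exact add_le_add h1 h2
      _ = 2 ^ m * (Real.cosh ‖x + v 0‖ + Real.cosh ‖x - v 0‖) *
            ∏ i : Fin m, Real.cosh ‖v i.succ‖ := by ring
      _ ≤ 2 ^ m * (2 * Real.cosh ‖x‖ * Real.cosh ‖v 0‖) *
            ∏ i : Fin m, Real.cosh ‖v i.succ‖ := by
          apply mul_le_mul_of_nonneg_right _ hprodpos
          apply mul_le_mul_of_nonneg_left hkey (by positivity)
      _ = 2 ^ (m + 1) * Real.cosh ‖x‖ *
            (Real.cosh ‖v 0‖ * ∏ i : Fin m, Real.cosh ‖v i.succ‖) := by ring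

lemma stmt14_prob {Ω : Type*} [MeasurableSpace Ω] (μ : Measure Ω) [IsProbabilityMeasure μ]
    {n : ℕ} {F : Type*} [NormedAddCommGroup F] [InnerProductSpace ℝ F]
    (α : Fin n → Ω → ℝ) (hmeas : ∀ t, Measurable (α t))
    (hindep : iIndepFun α μ)
    (hrad : ∀ t, μ {ω | α t ω = 1} = 1 / 2 ∧ μ {ω | α t ω = -1} = 1 / 2)
    (w : Fin n → F) (s B : ℝ) (hs : 0 < s) (hB : 0 < B)
    (hV : ∑ t, ‖w t‖ ^ 2 ≤ B) :
    μ {ω | s ≤ ‖∑ t, α t ω • w t‖} ≤ ENNReal.ofReal (2 * Real.exp (-(s ^ 2) / (2 * B))) := by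
  classical
  set c : ℝ := s / B with hc
  have hc0 : 0 ≤ c := by positivity
  set σ : (Fin n → Bool) → Fin n → ℝ := fun ε t => if ε t then 1 else -1 with hσ
  set S : (Fin n → Bool) → F := fun ε => ∑ t, σ ε t • w t with hS
  set Atom : (Fin n → Bool) → Set Ω := fun ε => ⋂ t, α t ⁻¹' {σ ε t} with hAtomdef
  set N : Set Ω := ⋃ t, ({ω | α t ω = 1} ∪ {ω | α t ω = -1})ᶜ with hNdef
  -- measurability of the elementary sets
  have hm1 : ∀ t, MeasurableSet {ω | α t ω = 1} := fun t =>
    (hmeas t) (measurableSet_singleton (1:ℝ))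
  have hm2 : ∀ t, MeasurableSet {ω | α t ω = -1} := fun t =>
    (hmeas t) (measurableSet_singleton (-1:ℝ))
  -- N is null
  have hN : μ N = 0 := by
    refine measure_iUnion_null fun t => ?_
    have hdisj : Disjoint {ω | α t ω = 1} {ω | α t ω = -1} := by
      rw [Set.disjoint_left]
      intro ω h1 h2
      simp only [Set.mem_setOf_eq] at h1 h2
      rw [h1] at h2; norm_num at h2
    have hu : μ ({ω | α t ω = 1} ∪ {ω | α t ω = -1}) = 1 := by
      rw [measure_union hdisj (hm2 t), (hrad t).1, (hrad t).2]
      rw [ENNReal.div_add_div_same, one_add_one_eq_two]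
      exact ENNReal.div_self two_ne_zero ENNReal.ofNat_ne_top
    rw [measure_compl ((hm1 t).union (hm2 t)) (measure_ne_top μ _), hu, measure_univ,
      tsub_self]
  -- atom measure
  have hAtomMeas : ∀ ε, μ (Atom ε) = ENNReal.ofReal ((1/2) ^ n) := by
    intro ε
    have h1 : μ (Atom ε) = μ (⋂ t ∈ Finset.univ, α t ⁻¹' {σ ε t}) := by
      simp [hAtomdef]
    rw [h1, hindep.measure_inter_preimage_eq_mul Finset.univ
      (fun t _ => measurableSet_singleton (σ ε t))]
    have h2 : ∀ t, μ (α t ⁻¹' {σ ε t}) = 1 / 2 := by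
      intro t
      by_cases hb : ε t
      · have : σ ε t = 1 := by simp [hσ, hb]
        rw [this]
        exact (hrad t).1
      · have : σ ε t = -1 := by simp [hσ, hb]
        rw [this]
        exact (hrad t).2
    rw [Finset.prod_congr rfl fun t _ => h2 t, Finset.prod_const]
    simp only [Finset.card_univ, Fintype.card_fin]
    rw [ENNReal.ofReal_pow (by norm_num)]
    congr 1
    rw [ENNReal.ofReal_div_of_pos (by norm_num)]
    norm_num
  -- inclusion into atoms and null set
  have hsub : {ω | s ≤ ‖∑ t, α t ω • w t‖} ⊆ (⋃ ε : Fin n → Bool,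
      Atom ε ∩ {ω | s ≤ ‖∑ t, α t ω • w t‖}) ∪ N := by
    intro ω hω
    by_cases hωN : ω ∈ N
    · exact Or.inr hωN
    · left
      have hval : ∀ t, α t ω = 1 ∨ α t ω = -1 := by
        intro t
        by_contra hcon
        push_neg at hcon
        apply hωN
        refine Set.mem_iUnion.mpr ⟨t, ?_⟩
        simp only [Set.mem_compl_iff, Set.mem_union, Set.mem_setOf_eq]
        tauto
      refine Set.mem_iUnion.mpr ⟨fun t => decide (α t ω = 1), ?_, hω⟩
      refine Set.mem_iInter.mpr fun t => ?_
      simp only [Set.mem_preimage, Set.mem_singleton_iff, hσ]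
      rcases hval t with h | h
      · simp [h]
      · simp only [h, decide_eq_true_eq]
        norm_num
  -- on an atom, the sum is S ε
  have hAtomVal : ∀ ε ω, ω ∈ Atom ε → (∑ t, α t ω • w t) = S ε := by
    intro ε ω hω
    refine Finset.sum_congr rfl fun t _ => ?_
    have := Set.mem_iInter.mp hω t
    simp only [Set.mem_preimage, Set.mem_singleton_iff] at this
    rw [this]
  -- bound each atom piece
  have hAtomBound : ∀ ε : Fin n → Bool,
      μ (Atom ε ∩ {ω | s ≤ ‖∑ t, α t ω • w t‖}) ≤
        ENNReal.ofReal ((1/2) ^ n * (Real.cosh (c * ‖S ε‖) / Real.cosh (c * s))) := by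
    intro ε
    by_cases hne : (Atom ε ∩ {ω | s ≤ ‖∑ t, α t ω • w t‖}).Nonempty
    · obtain ⟨ω0, hω0A, hω0E⟩ := hne
      have hsS : s ≤ ‖S ε‖ := by
        rw [← hAtomVal ε ω0 hω0A]
        exact hω0E
      have hratio : 1 ≤ Real.cosh (c * ‖S ε‖) / Real.cosh (c * s) := by
        rw [le_div_iff₀ (Real.cosh_pos _)]
        rw [one_mul]
        apply Real.cosh_le_cosh.mpr
        rw [abs_of_nonneg (by positivity), abs_of_nonneg (mul_nonneg hc0 (norm_nonneg _))]
        exact mul_le_mul_of_nonneg_left hsS hc0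
      calc μ (Atom ε ∩ _) ≤ μ (Atom ε) := measure_mono Set.inter_subset_left
        _ = ENNReal.ofReal ((1/2) ^ n) := hAtomMeas ε
        _ ≤ _ := by
            apply ENNReal.ofReal_le_ofReal
            nlinarith [pow_pos (by norm_num : (0:ℝ) < 1/2) n]
    · rw [Set.not_nonempty_iff_eq_empty.mp hne]
      simp
  -- sum over atoms
  calc μ {ω | s ≤ ‖∑ t, α t ω • w t‖}
      ≤ μ ((⋃ ε : Fin n → Bool, Atom ε ∩ {ω | s ≤ ‖∑ t, α t ω • w t‖}) ∪ N) :=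
        measure_mono hsub
    _ ≤ μ (⋃ ε : Fin n → Bool, Atom ε ∩ {ω | s ≤ ‖∑ t, α t ω • w t‖}) + μ N :=
        measure_union_le _ _
    _ = μ (⋃ ε : Fin n → Bool, Atom ε ∩ {ω | s ≤ ‖∑ t, α t ω • w t‖}) := by rw [hN, add_zero]
    _ ≤ ∑ ε : Fin n → Bool, μ (Atom ε ∩ {ω | s ≤ ‖∑ t, α t ω • w t‖}) :=
        measure_iUnion_fintype_le _ _
    _ ≤ ∑ ε : Fin n → Bool,
          ENNReal.ofReal ((1/2) ^ n * (Real.cosh (c * ‖S ε‖) / Real.cosh (c * s))) :=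
        Finset.sum_le_sum fun ε _ => hAtomBound ε
    _ = ENNReal.ofReal (∑ ε : Fin n → Bool,
          (1/2) ^ n * (Real.cosh (c * ‖S ε‖) / Real.cosh (c * s))) := by
        rw [ENNReal.ofReal_sum_of_nonneg]
        intro ε _
        positivity
    _ ≤ ENNReal.ofReal (2 * Real.exp (-(s ^ 2) / (2 * B))) := by
        apply ENNReal.ofReal_le_ofReal
        -- real-valued computation
        have hcoshS : ∀ ε, Real.cosh (c * ‖S ε‖) =
            Real.cosh ‖(0:F) + ∑ t, (if ε t then (1:ℝ) else -1) • (c • w t)‖ := by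
          intro ε
          congr 1
          rw [zero_add]
          have : (∑ t, (if ε t then (1:ℝ) else -1) • (c • w t)) = c • S ε := by
            rw [hS, Finset.smul_sum]
            exact Finset.sum_congr rfl fun t _ => smul_comm _ _ _
          rw [this, norm_smul, Real.norm_eq_abs, abs_of_nonneg hc0]
        have hmain := stmt14_sum_cosh n (fun t => c • w t) (0:F)
        have hsum : ∑ ε : Fin n → Bool, Real.cosh (c * ‖S ε‖) ≤
            2 ^ n * ∏ t, Real.cosh (c * ‖w t‖) := by
          calc ∑ ε : Fin n → Bool, Real.cosh (c * ‖S ε‖)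
              = ∑ ε : Fin n → Bool,
                  Real.cosh ‖(0:F) + ∑ t, (if ε t then (1:ℝ) else -1) • (c • w t)‖ :=
                Finset.sum_congr rfl fun ε _ => hcoshS ε
            _ ≤ 2 ^ n * Real.cosh ‖(0:F)‖ * ∏ t, Real.cosh ‖c • w t‖ := hmain
            _ = 2 ^ n * ∏ t, Real.cosh (c * ‖w t‖) := by
                simp [norm_smul, Real.norm_eq_abs, abs_of_nonneg hc0]
        have hprod : ∏ t, Real.cosh (c * ‖w t‖) ≤ Real.exp (c ^ 2 * B / 2) := by
          calc ∏ t, Real.cosh (c * ‖w t‖) ≤ ∏ t, Real.exp ((c * ‖w t‖) ^ 2 / 2) :=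
              Finset.prod_le_prod (fun t _ => (Real.cosh_pos _).le)
                (fun t _ => Real.cosh_le_exp_half_sq _)
            _ = Real.exp (∑ t, (c * ‖w t‖) ^ 2 / 2) := by rw [← Real.exp_sum]
            _ ≤ Real.exp (c ^ 2 * B / 2) := by
                apply Real.exp_le_exp.mpr
                have : ∑ t, (c * ‖w t‖) ^ 2 / 2 = c ^ 2 / 2 * ∑ t, ‖w t‖ ^ 2 := by
                  rw [Finset.mul_sum]
                  exact Finset.sum_congr rfl fun t _ => by ring
                rw [this]
                nlinarith [sq_nonneg c]
        have hcosh_ge : Real.exp (c * s) / 2 ≤ Real.cosh (c * s) := by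
          rw [Real.cosh_eq]
          have := Real.exp_pos (-(c * s))
          linarith
        have hcspos : 0 < Real.cosh (c * s) := Real.cosh_pos _
        have hfinal : ∑ ε : Fin n → Bool,
            (1/2) ^ n * (Real.cosh (c * ‖S ε‖) / Real.cosh (c * s)) ≤
            2 * Real.exp (c ^ 2 * B / 2 - c * s) := by
          have e1 : ∑ ε : Fin n → Bool,
              (1/2) ^ n * (Real.cosh (c * ‖S ε‖) / Real.cosh (c * s)) =
              (1/2) ^ n / Real.cosh (c * s) * ∑ ε : Fin n → Bool, Real.cosh (c * ‖S ε‖) := by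
            rw [Finset.mul_sum]
            exact Finset.sum_congr rfl fun ε _ => by ring
          rw [e1]
          have e2 : (1/2:ℝ) ^ n / Real.cosh (c * s) *
              ∑ ε : Fin n → Bool, Real.cosh (c * ‖S ε‖) ≤
              (1/2) ^ n / Real.cosh (c * s) * (2 ^ n * Real.exp (c ^ 2 * B / 2)) := by
            apply mul_le_mul_of_nonneg_left _ (by positivity)
            have h2n : (0:ℝ) ≤ 2 ^ n := by positivity
            exact hsum.trans (mul_le_mul_of_nonneg_left hprod h2n)
          refine e2.trans ?_
          have e3 : (1/2:ℝ) ^ n / Real.cosh (c * s) * (2 ^ n * Real.exp (c ^ 2 * B / 2)) =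
              Real.exp (c ^ 2 * B / 2) / Real.cosh (c * s) := by
            rw [div_mul_eq_mul_div, ← mul_assoc, ← mul_pow]
            norm_num
          rw [e3]
          rw [div_le_iff₀ hcspos]
          calc 2 * Real.exp (c ^ 2 * B / 2 - c * s) * Real.cosh (c * s) ≥
              2 * Real.exp (c ^ 2 * B / 2 - c * s) * (Real.exp (c * s) / 2) := by
                apply mul_le_mul_of_nonneg_left hcosh_ge (by positivity)
            _ = Real.exp (c ^ 2 * B / 2 - c * s) * Real.exp (c * s) := by ring
            _ = Real.exp (c ^ 2 * B / 2) := by rw [← Real.exp_add]; ring_nf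
        refine hfinal.trans ?_
        have : c ^ 2 * B / 2 - c * s = -(s ^ 2) / (2 * B) := by
          rw [hc]
          field_simp
          ring
        rw [this]

lemma stmt14_eig {d : ℕ} (M : Matrix (Fin d) (Fin d) ℝ) {r ε₀ : ℝ}
    (h : Module.End.HasEigenvalue (Matrix.toLin' M) r) (hr : ε₀ ≤ |r|) (hε : 0 < ε₀) :
    0 < d ∧ ∃ i, ε₀ ^ 2 / d ≤ ∑ j, (M i j) ^ 2 := by
  obtain ⟨v, hv⟩ := h.exists_hasEigenvector
  have hd : 0 < d := by
    rcases Nat.eq_zero_or_pos d with hd0 | hd0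
    · exfalso
      apply hv.2
      subst hd0
      exact Subsingleton.elim v 0
    · exact hd0
  refine ⟨hd, ?_⟩
  have hmv : M.mulVec v = r • v := by
    rw [← Matrix.toLin'_apply]
    exact hv.apply_eq_smul
  have hsum : ∀ i, (∑ j, M i j * v j) = r * v i := by
    intro i
    have := congrFun hmv i
    simpa [Matrix.mulVec, dotProduct] using this
  have hvpos : 0 < ∑ j, v j ^ 2 := by
    obtain ⟨j, hj⟩ : ∃ j, v j ≠ 0 := Function.ne_iff.mp hv.2
    refine Finset.sum_pos' (fun _ _ => sq_nonneg _) ⟨j, Finset.mem_univ j, by positivity⟩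
  have hCS : r ^ 2 * ∑ j, v j ^ 2 ≤ (∑ i, ∑ j, M i j ^ 2) * ∑ j, v j ^ 2 := by
    calc r ^ 2 * ∑ j, v j ^ 2 = ∑ i, (r * v i) ^ 2 := by
          rw [Finset.mul_sum]
          exact Finset.sum_congr rfl fun i _ => by ring
      _ = ∑ i, (∑ j, M i j * v j) ^ 2 := Finset.sum_congr rfl fun i _ => by rw [hsum i]
      _ ≤ ∑ i, (∑ j, M i j ^ 2) * ∑ j, v j ^ 2 :=
          Finset.sum_le_sum fun i _ => Finset.sum_mul_sq_le_sq_mul_sq _ _ _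
      _ = (∑ i, ∑ j, M i j ^ 2) * ∑ j, v j ^ 2 := by rw [Finset.sum_mul]
  have h2 : r ^ 2 ≤ ∑ i, ∑ j, M i j ^ 2 := le_of_mul_le_mul_right hCS hvpos
  have h3 : ε₀ ^ 2 ≤ r ^ 2 := by
    have := sq_abs r
    nlinarith [abs_nonneg r]
  by_contra hcon
  push_neg at hcon
  have hlt : ∑ i, ∑ j, M i j ^ 2 < ∑ _i : Fin d, ε₀ ^ 2 / d := by
    have : Nonempty (Fin d) := ⟨⟨0, hd⟩⟩
    exact Finset.sum_lt_sum_of_nonempty Finset.univ_nonempty fun i _ => hcon i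
  rw [Finset.sum_const, Finset.card_univ, Fintype.card_fin, nsmul_eq_mul] at hlt
  have hd' : (0:ℝ) < d := by exact_mod_cast hd
  rw [mul_div_cancel₀ _ (ne_of_gt hd')] at hlt
  linarith

/-- Matrix Hoeffding bound for `K = Σₜ αₜ φₜφₜᵀ` with i.i.d. Rademacher
signs `αₜ` and rows `φₜ` of an orthonormal-column matrix satisfying the coherence bound:
`P(max_i |λ_i(K)| ≥ ε₀) ≤ 2d exp(−n^ρ ε₀²/(2κd²))` for all `0 < ε₀ ≤ 1`. -/
theorem stmt14 {Ω : Type*} [MeasurableSpace Ω] (μ : Measure Ω) [IsProbabilityMeasure μ]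
    {n d : ℕ} (Q : Matrix (Fin n) (Fin d) ℝ) (κ ρ : ℝ) (α : Fin n → Ω → ℝ)
    (hκ : 0 < κ) (hρ1 : 0 < ρ) (hρ2 : ρ ≤ 1)
    (hQ : Qᵀ * Q = 1)
    (hcoh : ∀ t, ∑ j, (Q t j) ^ 2 ≤ ((d : ℝ) * κ / n) * (n : ℝ) ^ (1 - ρ))
    (hmeas : ∀ t, Measurable (α t))
    (hindep : iIndepFun α μ)
    (hrad : ∀ t, μ {ω | α t ω = 1} = 1 / 2 ∧ μ {ω | α t ω = -1} = 1 / 2) :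
    ∀ ε₀ : ℝ, 0 < ε₀ → ε₀ ≤ 1 →
      (μ {ω | ∃ r : ℝ, Module.End.HasEigenvalue
          (Matrix.toLin' (∑ t, α t ω • Matrix.vecMulVec (Q t) (Q t))) r ∧ ε₀ ≤ |r|}).toReal ≤
        2 * d * Real.exp (-((n : ℝ) ^ ρ * ε₀ ^ 2) / (2 * κ * d ^ 2)) := by
  intro ε₀ hε₀ hε₁
  -- trivial case d = 0
  rcases Nat.eq_zero_or_pos d with hd0 | hd0
  · have hempty : {ω | ∃ r : ℝ, Module.End.HasEigenvalue
        (Matrix.toLin' (∑ t, α t ω • Matrix.vecMulVec (Q t) (Q t))) r ∧ ε₀ ≤ |r|} = ∅ := by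
      ext ω
      simp only [Set.mem_setOf_eq, Set.mem_empty_iff_false, iff_false, not_exists]
      intro r hr
      have := (stmt14_eig _ hr.1 hr.2 hε₀).1
      omega
    rw [hempty, measure_empty]
    subst hd0
    simp
  -- n > 0
  have hn0 : 0 < n := by
    rcases Nat.eq_zero_or_pos n with hn | hn
    · exfalso
      have i0 : Fin d := ⟨0, hd0⟩
      have h1 := congrFun (congrFun hQ i0) i0
      rw [Matrix.mul_apply] at h1
      subst hn
      norm_num [Matrix.one_apply_eq] at h1
    · exact hn
  have hdR : (0:ℝ) < d := by exact_mod_cast hd0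
  have hnR : (0:ℝ) < n := by exact_mod_cast hn0
  set B : ℝ := ((d : ℝ) * κ / n) * (n : ℝ) ^ (1 - ρ) with hBdef
  have hP : (0:ℝ) < (n : ℝ) ^ (1 - ρ) := Real.rpow_pos_of_pos hnR _
  have hB : 0 < B := by positivity
  set s : ℝ := Real.sqrt (ε₀ ^ 2 / d) with hsdef
  have hs2 : s ^ 2 = ε₀ ^ 2 / d := Real.sq_sqrt (by positivity)
  have hs : 0 < s := Real.sqrt_pos.mpr (by positivity)
  -- the vectors
  set w : Fin d → Fin n → EuclideanSpace ℝ (Fin d) :=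
    fun i t => (WithLp.equiv 2 (Fin d → ℝ)).symm (fun j => Q t i * Q t j) with hwdef
  have hwapp : ∀ i t j, w i t j = Q t i * Q t j := fun i t j => rfl
  have hnormsq : ∀ y : EuclideanSpace ℝ (Fin d), ‖y‖ ^ 2 = ∑ j, (y j) ^ 2 := by
    intro y
    rw [EuclideanSpace.norm_eq, Real.sq_sqrt (by positivity)]
    exact Finset.sum_congr rfl fun j _ => by rw [Real.norm_eq_abs, sq_abs]
  have hcol : ∀ i, ∑ t, Q t i ^ 2 = 1 := by
    intro i
    have h1 := congrFun (congrFun hQ i) i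
    rw [Matrix.mul_apply, Matrix.one_apply_eq] at h1
    rw [← h1]
    exact Finset.sum_congr rfl fun t _ => by rw [Matrix.transpose_apply]; ring
  have hV : ∀ i, ∑ t, ‖w i t‖ ^ 2 ≤ B := by
    intro i
    have h1 : ∀ t, ‖w i t‖ ^ 2 = Q t i ^ 2 * ∑ j, Q t j ^ 2 := by
      intro t
      rw [hnormsq, Finset.mul_sum]
      exact Finset.sum_congr rfl fun j _ => by rw [hwapp]; ring
    calc ∑ t, ‖w i t‖ ^ 2 = ∑ t, Q t i ^ 2 * ∑ j, Q t j ^ 2 :=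
          Finset.sum_congr rfl fun t _ => h1 t
      _ ≤ ∑ t, Q t i ^ 2 * B :=
          Finset.sum_le_sum fun t _ => mul_le_mul_of_nonneg_left (hcoh t) (sq_nonneg _)
      _ = (∑ t, Q t i ^ 2) * B := by rw [Finset.sum_mul]
      _ = B := by rw [hcol i, one_mul]
  -- coordinates of the random sum
  have hsumapp : ∀ i ω j, (∑ t, α t ω • w i t) j = ∑ t, α t ω * (Q t i * Q t j) := by
    intro i ω j
    rw [WithLp.ofLp_sum, Finset.sum_apply]
    exact Finset.sum_congr rfl fun t _ => rfl
  -- inclusion of the event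
  have hsub : {ω | ∃ r : ℝ, Module.End.HasEigenvalue
      (Matrix.toLin' (∑ t, α t ω • Matrix.vecMulVec (Q t) (Q t))) r ∧ ε₀ ≤ |r|} ⊆
      ⋃ i : Fin d, {ω | s ≤ ‖∑ t, α t ω • w i t‖} := by
    intro ω hω
    obtain ⟨r, hr, habs⟩ := hω
    obtain ⟨-, i, hi⟩ := stmt14_eig _ hr habs hε₀
    have hM : ∀ i' j, (∑ t, α t ω • Matrix.vecMulVec (Q t) (Q t)) i' j =
        ∑ t, α t ω * (Q t i' * Q t j) := by
      intro i' j
      rw [Matrix.sum_apply]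
      exact Finset.sum_congr rfl fun t _ => by
        rw [Matrix.smul_apply, Matrix.vecMulVec_apply, smul_eq_mul]
    refine Set.mem_iUnion.mpr ⟨i, ?_⟩
    have h2 : ε₀ ^ 2 / d ≤ ‖∑ t, α t ω • w i t‖ ^ 2 := by
      rw [hnormsq]
      calc ε₀ ^ 2 / d ≤ ∑ j, ((∑ t, α t ω • Matrix.vecMulVec (Q t) (Q t)) i j) ^ 2 := hi
        _ = ∑ j, ((∑ t, α t ω • w i t) j) ^ 2 := by
            refine Finset.sum_congr rfl fun j _ => ?_
            rw [hM i j, hsumapp i ω j]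
    show s ≤ ‖∑ t, α t ω • w i t‖
    rw [hsdef]
    calc Real.sqrt (ε₀ ^ 2 / d) ≤ Real.sqrt (‖∑ t, α t ω • w i t‖ ^ 2) :=
          Real.sqrt_le_sqrt h2
      _ = ‖∑ t, α t ω • w i t‖ := Real.sqrt_sq (norm_nonneg _)
  -- assemble
  have hexp : -(s ^ 2) / (2 * B) = -((n : ℝ) ^ ρ * ε₀ ^ 2) / (2 * κ * d ^ 2) := by
    have hnn : (n : ℝ) ^ ρ * (n : ℝ) ^ (1 - ρ) = (n : ℝ) := by
      rw [← Real.rpow_add hnR, add_sub_cancel, Real.rpow_one]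
    rw [hs2, hBdef]
    field_simp
    linear_combination hnn
  have hbound : ∀ i : Fin d, μ {ω | s ≤ ‖∑ t, α t ω • w i t‖} ≤
      ENNReal.ofReal (2 * Real.exp (-((n : ℝ) ^ ρ * ε₀ ^ 2) / (2 * κ * d ^ 2))) := by
    intro i
    have := stmt14_prob μ α hmeas hindep hrad (w i) s B hs hB (hV i)
    rwa [hexp] at this
  calc (μ {ω | ∃ r : ℝ, Module.End.HasEigenvalue
      (Matrix.toLin' (∑ t, α t ω • Matrix.vecMulVec (Q t) (Q t))) r ∧ ε₀ ≤ |r|}).toReal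
      ≤ (ENNReal.ofReal ((d : ℝ) * (2 * Real.exp (-((n : ℝ) ^ ρ * ε₀ ^ 2) /
          (2 * κ * d ^ 2))))).toReal := by
        apply ENNReal.toReal_mono ENNReal.ofReal_ne_top
        calc μ _ ≤ μ (⋃ i : Fin d, {ω | s ≤ ‖∑ t, α t ω • w i t‖}) := measure_mono hsub
          _ ≤ ∑ i : Fin d, μ {ω | s ≤ ‖∑ t, α t ω • w i t‖} := measure_iUnion_fintype_le _ _
          _ ≤ ∑ _i : Fin d, ENNReal.ofReal (2 * Real.exp (-((n : ℝ) ^ ρ * ε₀ ^ 2) /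
              (2 * κ * d ^ 2))) := Finset.sum_le_sum fun i _ => hbound i
          _ = ENNReal.ofReal ((d : ℝ) * (2 * Real.exp (-((n : ℝ) ^ ρ * ε₀ ^ 2) /
              (2 * κ * d ^ 2)))) := by
              rw [Finset.sum_const, Finset.card_univ, Fintype.card_fin, nsmul_eq_mul,
                ← ENNReal.ofReal_natCast d, ← ENNReal.ofReal_mul (Nat.cast_nonneg d)]
    _ ≤ 2 * d * Real.exp (-((n : ℝ) ^ ρ * ε₀ ^ 2) / (2 * κ * d ^ 2)) := by
        rw [ENNReal.toReal_ofReal (by positivity)]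
        apply le_of_eq
        ring
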